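/- Let ω ∈ D̂ be a radial weight. For every natural number N ≥ 1 there exists a constant C = C(ω, N) > 0 such that for all x ≥ 1, ∫_0^1 r^x (1-r)^N ω(r) dr ≤ C ω_x / x^N, where ω_x = ∫_0^1 r^x ω(r) dr. -/

import Mathlib

open MeasureTheory

/-- The tail integral of a radial weight. -/
noncomputable def hat (ω : ℝ → ℝ) (r : ℝ) : ℝ := ∫ s in r..1, ω s

/-- The x-th moment of a radial weight. -/
noncomputable def moment (ω : ℝ → ℝ) (x : ℝ) : ℝ := ∫ r in (0:ℝ)..1, r ^ x * ω r

/-!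
Put `u = 1/(2x)`. Bernoulli's inequality gives `r^x ≥ 1/2` on `[1-u, 1]`, so `ω̂(1-u) ≤ 2 ω_x`.
For the upper bound split `[0, 1]` into `[1-u, 1]`, where `(1-r)^N ≤ u^N`, and the dyadic
pieces `[1 - 2^(k+1) u, 1 - 2^k u]`. On the `k`-th piece `(1-r)^N ≤ (2^(k+1) u)^N`,
`r^x ≤ exp(-2^k/2)`, and iterating the doubling condition `k+1` times bounds the `ω`-mass of the piece by `C^(k+1) ω̂(1-u)`.
The doubly exponential decay of `exp(-2^k/2)` beats the geometric growth of `(2^N C)^(k+1)`, so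
the pieces add up to a constant times `u^N ω̂(1-u) ≤ 2 ω_x / x^N`.
-/

open MeasureTheory Real Set Filter Topology intervalIntegral

lemma IntervalIntegrable.mono_Icc_zero_one {f : ℝ → ℝ} (hf : IntervalIntegrable f volume 0 1)
    {a b : ℝ} (ha : a ∈ Icc (0:ℝ) 1) (hb : b ∈ Icc (0:ℝ) 1) : IntervalIntegrable f volume a b := by
  rw [← uIcc_of_le zero_le_one] at ha hb
  exact hf.mono_set (uIcc_subset_uIcc ha hb)

lemma intervalIntegral.integral_nonneg_of_Ioo {f : ℝ → ℝ} {a b : ℝ} (hab : a ≤ b)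
    (hf : ∀ x ∈ Ioo a b, 0 ≤ f x) : 0 ≤ ∫ x in a..b, f x := by
  rw [integral_of_le hab, integral_Ioc_eq_integral_Ioo]
  exact setIntegral_nonneg measurableSet_Ioo hf

lemma intervalIntegral.integral_le_sum_of_pieces {f : ℝ → ℝ} {a b : ℕ → ℝ} {K : ℕ}
    (hf : ∀ k < K, IntervalIntegrable f volume (a (k + 1)) (a k))
    (hb : ∀ k < K, ∫ x in a (k + 1)..a k, f x ≤ b k) :
    ∫ x in a K..a 0, f x ≤ ∑ k ∈ Finset.range K, b k := by
  rw [integral_symm, ← sum_integral_adjacent_intervals fun k hk => (hf k hk).symm,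
    ← Finset.sum_neg_distrib]
  refine Finset.sum_le_sum fun k hk => ?_
  rw [← integral_symm]
  exact hb k (Finset.mem_range.1 hk)

lemma summable_pow_mul_exp_neg_mul_two_pow (D : ℝ) {c : ℝ} (hc : 0 < c) :
    Summable fun k : ℕ => D ^ k * exp (-(c * 2 ^ k)) := by
  have hlim : Tendsto (fun k : ℕ => |D| * exp (-(c * 2 ^ k))) atTop (𝓝 0) := by
    simpa using (tendsto_exp_neg_atTop_nhds_zero.comp
      ((tendsto_pow_atTop_atTop_of_one_lt one_lt_two).const_mul_atTop hc)).const_mul |D|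
  refine summable_of_ratio_norm_eventually_le (r := 1 / 2) (by norm_num) ?_
  filter_upwards [hlim.eventually (ge_mem_nhds (by norm_num : (0:ℝ) < 1 / 2))] with k hk
  have hsplit : exp (-(c * 2 ^ (k + 1))) = exp (-(c * 2 ^ k)) * exp (-(c * 2 ^ k)) := by
    rw [← exp_add]; ring_nf
  rw [norm_mul, norm_mul, norm_pow, norm_pow, Real.norm_eq_abs, Real.norm_of_nonneg (exp_pos _).le,
    Real.norm_of_nonneg (exp_pos _).le, hsplit, pow_succ]
  calc |D| ^ k * |D| * (exp (-(c * 2 ^ k)) * exp (-(c * 2 ^ k)))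
      = (|D| * exp (-(c * 2 ^ k))) * (|D| ^ k * exp (-(c * 2 ^ k))) := by ring
    _ ≤ 1 / 2 * (|D| ^ k * exp (-(c * 2 ^ k))) := by gcongr

lemma rpow_le_exp_neg_mul {r δ x : ℝ} (hr : 0 ≤ r) (hrδ : r ≤ max (1 - δ) 0) (hx : 0 ≤ x) :
    r ^ x ≤ exp (-(δ * x)) := by
  have hr_exp : r ≤ exp (-δ) :=
    hrδ.trans (max_le (by linarith [add_one_le_exp (-δ)]) (exp_pos _).le)
  calc r ^ x ≤ exp (-δ) ^ x := rpow_le_rpow hr hr_exp hx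
    _ = exp (-(δ * x)) := by rw [← exp_mul, neg_mul]

def dyadicPoint (u : ℝ) (k : ℕ) : ℝ := max (1 - 2 ^ k * u) 0

lemma dyadicPoint_nonneg (u : ℝ) (k : ℕ) : 0 ≤ dyadicPoint u k := le_max_right _ _

lemma one_sub_le_dyadicPoint (u : ℝ) (k : ℕ) : 1 - 2 ^ k * u ≤ dyadicPoint u k := le_max_left _ _

lemma dyadicPoint_le_one_sub {u : ℝ} (hu : 0 ≤ u) (hu1 : u ≤ 1) (k : ℕ) :
    dyadicPoint u k ≤ 1 - u :=
  max_le (by nlinarith [one_le_pow₀ (M₀ := ℝ) one_le_two (n := k)]) (by linarith)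

lemma dyadicPoint_mem_Icc {u : ℝ} (hu : 0 ≤ u) (hu1 : u ≤ 1) (k : ℕ) :
    dyadicPoint u k ∈ Icc (0:ℝ) 1 :=
  ⟨dyadicPoint_nonneg u k, (dyadicPoint_le_one_sub hu hu1 k).trans (by linarith)⟩

lemma dyadicPoint_succ_le {u : ℝ} (hu : 0 ≤ u) (k : ℕ) :
    dyadicPoint u (k + 1) ≤ dyadicPoint u k :=
  max_le_max_right 0 (by rw [pow_succ]; nlinarith [pow_pos (two_pos (α := ℝ)) k])

lemma dyadicPoint_zero {u : ℝ} (hu1 : u ≤ 1) : dyadicPoint u 0 = 1 - u := by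
  rw [dyadicPoint, pow_zero, one_mul, max_eq_left (by linarith)]

lemma dyadicPoint_eq_zero {u : ℝ} {k : ℕ} (h : 1 ≤ 2 ^ k * u) : dyadicPoint u k = 0 :=
  max_eq_right (by linarith)

section Weight

variable {ω : ℝ → ℝ}

lemma hat_nonneg (hω_nonneg : ∀ r ∈ Ico (0:ℝ) 1, 0 ≤ ω r) {a : ℝ} (ha : a ∈ Icc (0:ℝ) 1) :
    0 ≤ hat ω a :=
  integral_nonneg_of_Ioo ha.2 fun r hr => hω_nonneg r ⟨ha.1.trans hr.1.le, hr.2⟩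

lemma integral_add_hat (hω_int : IntervalIntegrable ω volume 0 1) {a b : ℝ}
    (ha : a ∈ Icc (0:ℝ) 1) (hb : b ∈ Icc (0:ℝ) 1) :
    (∫ r in a..b, ω r) + hat ω b = hat ω a :=
  integral_add_adjacent_intervals (hω_int.mono_Icc_zero_one ha hb)
    (hω_int.mono_Icc_zero_one hb ⟨zero_le_one, le_rfl⟩)

lemma integral_le_hat (hω_nonneg : ∀ r ∈ Ico (0:ℝ) 1, 0 ≤ ω r)
    (hω_int : IntervalIntegrable ω volume 0 1) {a b : ℝ} (ha : 0 ≤ a) (hab : a ≤ b) (hb : b ≤ 1) :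
    ∫ r in a..b, ω r ≤ hat ω a := by
  have hb' : b ∈ Icc (0:ℝ) 1 := ⟨ha.trans hab, hb⟩
  linarith [integral_add_hat hω_int ⟨ha, hab.trans hb⟩ hb', hat_nonneg hω_nonneg hb']

lemma hat_antitoneOn (hω_nonneg : ∀ r ∈ Ico (0:ℝ) 1, 0 ≤ ω r)
    (hω_int : IntervalIntegrable ω volume 0 1) : AntitoneOn (hat ω) (Icc 0 1) := by
  intro a ha b hb hab
  have hmass : 0 ≤ ∫ r in a..b, ω r :=
    integral_nonneg_of_Ioo hab fun r hr => hω_nonneg r ⟨ha.1.trans hr.1.le, hr.2.trans_le hb.2⟩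
  linarith [integral_add_hat hω_int ha hb]

lemma hat_le_pow_mul_hat (hω_nonneg : ∀ r ∈ Ico (0:ℝ) 1, 0 ≤ ω r)
    (hω_int : IntervalIntegrable ω volume 0 1) {C : ℝ}
    (hD : ∀ r ∈ Ico (0:ℝ) 1, hat ω r ≤ C * hat ω ((1 + r) / 2)) (hC : 0 ≤ C)
    {δ : ℝ} (hδ : δ ≤ 1) (n : ℕ) {t : ℝ} (ht : t ∈ Ico (0:ℝ) 1) (htδ : 1 - t ≤ 2 ^ n * δ) :
    hat ω t ≤ C ^ n * hat ω (1 - δ) := by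
  induction n generalizing t with
  | zero =>
    rw [pow_zero, one_mul] at htδ ⊢
    exact hat_antitoneOn hω_nonneg hω_int ⟨by linarith, by linarith [ht.2]⟩ ⟨ht.1, ht.2.le⟩
      (by linarith)
  | succ n ih =>
    have hmid : (1 + t) / 2 ∈ Ico (0:ℝ) 1 := ⟨by linarith [ht.1], by linarith [ht.2]⟩
    have hmidδ : 1 - (1 + t) / 2 ≤ 2 ^ n * δ := by rw [pow_succ, mul_right_comm] at htδ; linarith
    calc hat ω t ≤ C * hat ω ((1 + t) / 2) := hD t ht
      _ ≤ C * (C ^ n * hat ω (1 - δ)) := by gcongr; exact ih hmid hmidδ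
      _ = C ^ (n + 1) * hat ω (1 - δ) := by ring

lemma hat_le_two_mul_moment (hω_nonneg : ∀ r ∈ Ico (0:ℝ) 1, 0 ≤ ω r)
    (hω_int : IntervalIntegrable ω volume 0 1) {x : ℝ} (hx : 1 ≤ x) :
    hat ω (1 - (2 * x)⁻¹) ≤ 2 * moment ω x := by
  have hu : (2 * x)⁻¹ ≤ 1 / 2 := by rw [inv_le_comm₀ (by positivity) (by norm_num)]; linarith
  have hu0 : 0 < (2 * x)⁻¹ := by positivity
  set s := 1 - (2 * x)⁻¹ with hs_def
  have hs : s ∈ Icc (0:ℝ) 1 := ⟨by linarith, by linarith⟩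
  have hg : IntervalIntegrable (fun r => r ^ x * ω r) volume 0 1 :=
    hω_int.continuousOn_mul (continuous_rpow_const (by linarith)).continuousOn
  have hbernoulli : 1 / 2 ≤ s ^ x := by
    have h := one_add_mul_self_le_rpow_one_add (s := -(2 * x)⁻¹) (by linarith) hx
    rw [show x * -(2 * x)⁻¹ = -(1 / 2) by field_simp] at h
    convert h using 1
    · norm_num
    · rw [hs_def, sub_eq_add_neg]
  have hhead : 0 ≤ ∫ r in (0:ℝ)..s, r ^ x * ω r :=
    integral_nonneg_of_Ioo hs.1 fun r hr =>
      mul_nonneg (rpow_nonneg hr.1.le x) (hω_nonneg r ⟨hr.1.le, hr.2.trans_le hs.2⟩)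
  have htail : 1 / 2 * hat ω s ≤ ∫ r in s..1, r ^ x * ω r := by
    rw [hat, ← intervalIntegral.integral_const_mul]
    refine integral_mono_on_of_le_Ioo hs.2
      ((hω_int.mono_Icc_zero_one hs ⟨zero_le_one, le_rfl⟩).const_mul _)
      (hg.mono_Icc_zero_one hs ⟨zero_le_one, le_rfl⟩) fun r hr => ?_
    have hr0 : 0 ≤ r := hs.1.trans hr.1.le
    exact mul_le_mul_of_nonneg_right (hbernoulli.trans (rpow_le_rpow hs.1 hr.1.le (by linarith)))
      (hω_nonneg r ⟨hr0, hr.2⟩)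
  have hsplit := integral_add_adjacent_intervals (hg.mono_Icc_zero_one ⟨le_rfl, zero_le_one⟩ hs)
    (hg.mono_Icc_zero_one hs ⟨zero_le_one, le_rfl⟩)
  rw [← moment] at hsplit
  linarith

lemma intervalIntegrable_rpow_mul_one_sub_pow_mul (hω_int : IntervalIntegrable ω volume 0 1)
    {x : ℝ} (hx : 0 ≤ x) (N : ℕ) :
    IntervalIntegrable (fun r => r ^ x * (1 - r) ^ N * ω r) volume 0 1 :=
  hω_int.continuousOn_mul
    ((continuous_rpow_const hx).mul ((continuous_const.sub continuous_id).pow N)).continuousOn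

lemma integral_dyadicPiece_le (hω_nonneg : ∀ r ∈ Ico (0:ℝ) 1, 0 ≤ ω r)
    (hω_int : IntervalIntegrable ω volume 0 1) {C : ℝ}
    (hD : ∀ r ∈ Ico (0:ℝ) 1, hat ω r ≤ C * hat ω ((1 + r) / 2)) (hC : 0 ≤ C) (N : ℕ)
    {u x : ℝ} (hu : 0 < u) (hu1 : u ≤ 1) (hx : 0 ≤ x) (k : ℕ) :
    ∫ r in dyadicPoint u (k + 1)..dyadicPoint u k, r ^ x * (1 - r) ^ N * ω r ≤
      (2 ^ N * C) ^ (k + 1) * exp (-(u * x * 2 ^ k)) * (u ^ N * hat ω (1 - u)) := by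
  set a := dyadicPoint u
  have ha := dyadicPoint_mem_Icc hu.le hu1
  have hab : a (k + 1) ≤ a k := dyadicPoint_succ_le hu.le k
  have hstart : 1 - a (k + 1) ≤ 2 ^ (k + 1) * u := by linarith [one_sub_le_dyadicPoint u (k + 1)]
  set B := exp (-(u * x * 2 ^ k)) * (2 ^ (k + 1) * u) ^ N
  have hpoint : ∀ r ∈ Ioo (a (k + 1)) (a k), r ^ x * (1 - r) ^ N * ω r ≤ B * ω r := by
    intro r hr
    have hr0 : 0 ≤ r := (ha (k + 1)).1.trans hr.1.le
    have hr1 : r < 1 := hr.2.trans_le (ha k).2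
    have hrx : r ^ x ≤ exp (-(u * x * 2 ^ k)) :=
      (rpow_le_exp_neg_mul hr0 hr.2.le hx).trans_eq (by ring_nf)
    have hrN : (1 - r) ^ N ≤ (2 ^ (k + 1) * u) ^ N :=
      pow_le_pow_left₀ (by linarith) (by linarith [hr.1]) N
    exact mul_le_mul_of_nonneg_right
      (mul_le_mul hrx hrN (pow_nonneg (by linarith) N) (exp_pos _).le) (hω_nonneg r ⟨hr0, hr1⟩)
  have hmass : ∫ r in a (k + 1)..a k, ω r ≤ C ^ (k + 1) * hat ω (1 - u) :=
    (integral_le_hat hω_nonneg hω_int (ha _).1 hab (ha k).2).trans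
      (hat_le_pow_mul_hat hω_nonneg hω_int hD hC hu1 (k + 1)
        ⟨(ha _).1, (dyadicPoint_le_one_sub hu.le hu1 _).trans_lt (by linarith)⟩ hstart)
  have hω_piece := hω_int.mono_Icc_zero_one (ha (k + 1)) (ha k)
  calc ∫ r in a (k + 1)..a k, r ^ x * (1 - r) ^ N * ω r
      ≤ ∫ r in a (k + 1)..a k, B * ω r :=
        integral_mono_on_of_le_Ioo hab
          ((intervalIntegrable_rpow_mul_one_sub_pow_mul hω_int hx N).mono_Icc_zero_one
            (ha (k + 1)) (ha k)) (hω_piece.const_mul B) hpoint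
    _ = B * ∫ r in a (k + 1)..a k, ω r := intervalIntegral.integral_const_mul _ _
    _ ≤ B * (C ^ (k + 1) * hat ω (1 - u)) := by gcongr
    _ = (2 ^ N * C) ^ (k + 1) * exp (-(u * x * 2 ^ k)) * (u ^ N * hat ω (1 - u)) := by ring

lemma integral_zero_one_sub_le_tsum_mul_hat (hω_nonneg : ∀ r ∈ Ico (0:ℝ) 1, 0 ≤ ω r)
    (hω_int : IntervalIntegrable ω volume 0 1) {C : ℝ}
    (hD : ∀ r ∈ Ico (0:ℝ) 1, hat ω r ≤ C * hat ω ((1 + r) / 2)) (hC : 0 ≤ C) (N : ℕ)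
    {u x : ℝ} (hu : 0 < u) (hu1 : u ≤ 1) (hx : 0 < x) :
    ∫ r in (0:ℝ)..1 - u, r ^ x * (1 - r) ^ N * ω r ≤
      (∑' k : ℕ, (2 ^ N * C) ^ (k + 1) * exp (-(u * x * 2 ^ k))) * (u ^ N * hat ω (1 - u)) := by
  have hterm_nonneg : ∀ k : ℕ, 0 ≤ (2 ^ N * C) ^ (k + 1) * exp (-(u * x * 2 ^ k)) := fun k =>
    mul_nonneg (pow_nonneg (mul_nonneg (by positivity) hC) _) (exp_pos _).le
  have hsummable : Summable fun k : ℕ => (2 ^ N * C) ^ (k + 1) * exp (-(u * x * 2 ^ k)) := by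
    simpa only [pow_succ', mul_assoc] using
      (summable_pow_mul_exp_neg_mul_two_pow (2 ^ N * C) (mul_pos hu hx)).mul_left (2 ^ N * C)
  obtain ⟨K, hK⟩ := pow_unbounded_of_one_lt u⁻¹ (one_lt_two (α := ℝ))
  have hK' : 1 ≤ 2 ^ K * u := by
    have := mul_lt_mul_of_pos_right hK hu
    rw [inv_mul_cancel₀ hu.ne'] at this
    exact this.le
  have hf := intervalIntegrable_rpow_mul_one_sub_pow_mul hω_int hx.le N
  have ha := dyadicPoint_mem_Icc hu.le hu1
  have hpieces := integral_le_sum_of_pieces (K := K)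
    (fun k _ => hf.mono_Icc_zero_one (ha (k + 1)) (ha k))
    (fun k _ => integral_dyadicPiece_le hω_nonneg hω_int hD hC N hu hu1 hx.le k)
  rw [dyadicPoint_zero hu1, dyadicPoint_eq_zero hK', ← Finset.sum_mul] at hpieces
  exact hpieces.trans <| mul_le_mul_of_nonneg_right
    (hsummable.sum_le_tsum _ fun k _ => hterm_nonneg k)
    (mul_nonneg (pow_nonneg hu.le N) (hat_nonneg hω_nonneg ⟨by linarith, by linarith⟩))

lemma integral_one_sub_one_le_pow_mul_hat (hω_nonneg : ∀ r ∈ Ico (0:ℝ) 1, 0 ≤ ω r)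
    (hω_int : IntervalIntegrable ω volume 0 1) (N : ℕ) {u x : ℝ} (hu : 0 ≤ u) (hu1 : u ≤ 1)
    (hx : 0 ≤ x) :
    ∫ r in 1 - u..1, r ^ x * (1 - r) ^ N * ω r ≤ u ^ N * hat ω (1 - u) := by
  have hs : 1 - u ∈ Icc (0:ℝ) 1 := ⟨by linarith, by linarith⟩
  rw [hat, ← intervalIntegral.integral_const_mul]
  refine integral_mono_on_of_le_Ioo hs.2
    ((intervalIntegrable_rpow_mul_one_sub_pow_mul hω_int hx N).mono_Icc_zero_one hs
      ⟨zero_le_one, le_rfl⟩)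
    ((hω_int.mono_Icc_zero_one hs ⟨zero_le_one, le_rfl⟩).const_mul _) fun r hr => ?_
  have hr0 : 0 ≤ r := hs.1.trans hr.1.le
  refine mul_le_mul_of_nonneg_right ?_ (hω_nonneg r ⟨hr0, hr.2⟩)
  calc r ^ x * (1 - r) ^ N ≤ 1 * u ^ N :=
        mul_le_mul (rpow_le_one hr0 hr.2.le hx)
          (pow_le_pow_left₀ (by linarith [hr.2]) (by linarith [hr.1]) N)
          (pow_nonneg (by linarith [hr.2]) N) zero_le_one
    _ = u ^ N := one_mul _

lemma integral_rpow_mul_one_sub_pow_mul_le (hω_nonneg : ∀ r ∈ Ico (0:ℝ) 1, 0 ≤ ω r)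
    (hω_int : IntervalIntegrable ω volume 0 1) {C : ℝ}
    (hD : ∀ r ∈ Ico (0:ℝ) 1, hat ω r ≤ C * hat ω ((1 + r) / 2)) (hC : 0 ≤ C) (N : ℕ)
    {u x : ℝ} (hu : 0 < u) (hu1 : u ≤ 1) (hx : 0 < x) :
    ∫ r in (0:ℝ)..1, r ^ x * (1 - r) ^ N * ω r ≤
      (∑' k : ℕ, (2 ^ N * C) ^ (k + 1) * exp (-(u * x * 2 ^ k)) + 1) *
        (u ^ N * hat ω (1 - u)) := by
  have hf := intervalIntegrable_rpow_mul_one_sub_pow_mul hω_int hx.le N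
  have hs : 1 - u ∈ Icc (0:ℝ) 1 := ⟨by linarith, by linarith⟩
  rw [← integral_add_adjacent_intervals (hf.mono_Icc_zero_one ⟨le_rfl, zero_le_one⟩ hs)
    (hf.mono_Icc_zero_one hs ⟨zero_le_one, le_rfl⟩), add_mul, one_mul]
  exact add_le_add (integral_zero_one_sub_le_tsum_mul_hat hω_nonneg hω_int hD hC N hu hu1 hx)
    (integral_one_sub_one_le_pow_mul_hat hω_nonneg hω_int N hu.le hu1 hx.le)

end Weight

theorem modified_moment_estimate_general (ω : ℝ → ℝ)
    (hω_nonneg : ∀ r ∈ Set.Ico (0:ℝ) 1, 0 ≤ ω r)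
    (hω_int : IntervalIntegrable ω volume 0 1)
    (hDhat : ∃ C > 1, ∀ r ∈ Set.Ico (0:ℝ) 1, hat ω r ≤ C * hat ω ((1 + r) / 2))
    (N : ℕ) :
    ∃ C > 0, ∀ x : ℝ, 1 ≤ x →
      (∫ r in (0:ℝ)..1, r ^ x * (1 - r) ^ N * ω r) ≤ C * moment ω x / x ^ N := by
  obtain ⟨C, hC, hD⟩ := hDhat
  set S := ∑' k : ℕ, (2 ^ N * C) ^ (k + 1) * exp (-(2⁻¹ * 2 ^ k)) + 1
  have hS : 0 < S := add_pos_of_nonneg_of_pos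
    (tsum_nonneg fun k => mul_nonneg (pow_nonneg (by positivity) _) (exp_pos _).le) one_pos
  refine ⟨2 * S, by positivity, fun x hx => ?_⟩
  have hx0 : 0 < x := by linarith
  have hu : (2 * x)⁻¹ ≤ x⁻¹ := inv_anti₀ hx0 (by linarith)
  have hu1 : (2 * x)⁻¹ ≤ 1 := hu.trans (inv_le_one_of_one_le₀ hx)
  have hupper := integral_rpow_mul_one_sub_pow_mul_le hω_nonneg hω_int hD (by linarith) N
    (by positivity) hu1 hx0
  rw [show (2 * x)⁻¹ * x = 2⁻¹ by field_simp] at hupper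
  have hlower := hat_le_two_mul_moment hω_nonneg hω_int hx
  have hhat : 0 ≤ hat ω (1 - (2 * x)⁻¹) :=
    hat_nonneg hω_nonneg ⟨by linarith, by linarith [inv_pos.2 (by positivity : 0 < 2 * x)]⟩
  have hmoment : 0 ≤ 2 * moment ω x := hhat.trans hlower
  calc _ ≤ S * ((2 * x)⁻¹ ^ N * hat ω (1 - (2 * x)⁻¹)) := hupper
    _ ≤ S * (x⁻¹ ^ N * (2 * moment ω x)) := by gcongr
    _ = 2 * S * moment ω x / x ^ N := by rw [inv_pow]; ring

theorem modified_moment_estimate (ω : ℝ → ℝ)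
    (hω_nonneg : ∀ r ∈ Set.Ico (0:ℝ) 1, 0 ≤ ω r)
    (hω_int : IntervalIntegrable ω volume 0 1)
    (hω_pos : ∀ r ∈ Set.Ico (0:ℝ) 1, 0 < hat ω r)
    (hDhat : ∃ C > 1, ∀ r ∈ Set.Ico (0:ℝ) 1, hat ω r ≤ C * hat ω ((1 + r) / 2))
    (N : ℕ) (hN : 1 ≤ N) :
    ∃ C > 0, ∀ x : ℝ, 1 ≤ x →
      (∫ r in (0:ℝ)..1, r ^ x * (1 - r) ^ N * ω r) ≤ C * moment ω x / x ^ N :=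
  modified_moment_estimate_general ω hω_nonneg hω_int hDhat N
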